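/- arXiv:2310.07674 — 5 statements merged into one kernel-verified Lean document; each statement's English description precedes it below -/
import Mathlib

section
/- Let (x_k), (y_k), (t_k) be generated by Algorithm 1 started at x_0, and suppose r is the first iteration at which the restart condition f'(y_r)·(x_{r+1} − x_r) > 0 is satisfied. Then f(x_{r+2}) ≤ f(x_{r+1}), and moreover |x_{r+2} − x*| ≤ |x_{r+1} − x*|. -/
open Filter Finset

/-- The gradient step operator `T(y) = y - (1/L) f'(y)`. -/
noncomputable def gradStep (L : ℝ) (f : ℝ → ℝ) (y : ℝ) : ℝ := y - (1 / L) * deriv f y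

/-- A parameter sequence for accelerated gradient descent:
`t 0 = 1`, `t k ≥ (k+2)/2` and `t k ^ 2 ≥ t (k+1) ^ 2 - t (k+1)`. -/
def ParamSeq (t : ℕ → ℝ) : Prop :=
  t 0 = 1 ∧ ∀ k : ℕ, ((k : ℝ) + 2) / 2 ≤ t k ∧ (t (k + 1)) ^ 2 - t (k + 1) ≤ (t k) ^ 2

/-- The gradient restart condition `f'(y_k) (x_{k+1} - x_k) > 0` at iteration `k`. -/
def RestartAt (f : ℝ → ℝ) (x y : ℕ → ℝ) (k : ℕ) : Prop :=
  0 < deriv f (y k) * (x (k + 1) - x k)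

/-- `IsAlgo1 L f tt x0 x y t` : the sequences `x`, `y`, `t` are generated by Algorithm 1
(AGD with gradient restarts) with parameter sequence `tt`, started at `x0`.
The counter `c` keeps track of the position in the parameter sequence; it is reset to `0`
whenever the gradient restart condition is triggered, which realizes the reset
`t_{k+1+m} := tt_m` of the parameters. -/
def IsAlgo1 (L : ℝ) (f : ℝ → ℝ) (tt : ℕ → ℝ) (x0 : ℝ) (x y t : ℕ → ℝ) : Prop :=
  x 0 = x0 ∧ y 0 = x0 ∧
  (∀ k, x (k + 1) = gradStep L f (y k)) ∧
  ∃ c : ℕ → ℕ, c 0 = 0 ∧ (∀ k, t k = tt (c k)) ∧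
    ∀ k,
      (deriv f (y k) * (x (k + 1) - x k) ≤ 0 →
        y (k + 1) = x (k + 1) + ((t k - 1) / t (k + 1)) * (x (k + 1) - x k) ∧
          c (k + 1) = c k + 1) ∧
      (0 < deriv f (y k) * (x (k + 1) - x k) →
        y (k + 1) = x (k + 1) ∧ c (k + 1) = 0)

/-- Gradient inequality for convex differentiable functions on ℝ. -/
lemma grad_ineq {f : ℝ → ℝ} (hconv : ConvexOn ℝ Set.univ f)
    (hdiff : Differentiable ℝ f) (a b : ℝ) :
    f b + deriv f b * (a - b) ≤ f a := by
  rcases lt_trichotomy a b with h | h | h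
  · have := hconv.slope_le_deriv (Set.mem_univ a) (Set.mem_univ b) h (hdiff b)
    rw [slope_def_field] at this
    have hba : 0 < b - a := by linarith
    rw [div_le_iff₀ hba] at this
    nlinarith
  · subst h; simp
  · have := hconv.deriv_le_slope (Set.mem_univ b) (Set.mem_univ a) h (hdiff b)
    rw [slope_def_field] at this
    have hab : 0 < a - b := by linarith
    rw [le_div_iff₀ hab] at this
    nlinarith

theorem stmt4
    (L : ℝ) (hL : 0 < L) (f : ℝ → ℝ)
    (hconv : ConvexOn ℝ Set.univ f) (hdiff : Differentiable ℝ f)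
    (hlip : ∀ a b : ℝ, |deriv f a - deriv f b| ≤ L * |a - b|)
    (tt : ℕ → ℝ) (htt : ParamSeq tt)
    (x0 : ℝ) (x y t : ℕ → ℝ) (halg : IsAlgo1 L f tt x0 x y t)
    (xstar : ℝ) (hmin : IsMinOn f Set.univ xstar)
    (hproj : ∀ z : ℝ, IsMinOn f Set.univ z → |x0 - xstar| ≤ |x0 - z|)
    (r : ℕ) (hnores : ∀ j < r, ¬ RestartAt f x y j)
    (hres : RestartAt f x y r) :
    f (x (r + 2)) ≤ f (x (r + 1)) ∧ |x (r + 2) - xstar| ≤ |x (r + 1) - xstar| := by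
  obtain ⟨hx0, hy0, hstep, c, hc0, hct, hiter⟩ := halg
  have hy1 : y (r + 1) = x (r + 1) := ((hiter r).2 hres).1
  have hx2 : x (r + 2) = x (r + 1) - (1 / L) * deriv f (x (r + 1)) := by
    have := hstep (r + 1)
    rw [hy1] at this
    simpa [gradStep] using this
  set z := x (r + 1) with hz
  set d := deriv f z with hd
  set s := (1 / L) * d with hs
  have hLne : L ≠ 0 := ne_of_gt hL
  constructor
  · -- f (z - s) ≤ f z
    rw [hx2]
    have hgi := grad_ineq hconv hdiff z (z - s)
    -- need deriv f (z - s) * s ≥ 0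
    have hlzs := hlip z (z - s)
    have habs : |z - (z - s)| = |d| / L := by
      rw [show z - (z - s) = s by ring, hs, abs_mul]
      rw [abs_of_nonneg (by positivity : (0:ℝ) ≤ 1 / L)]
      field_simp
    rw [habs] at hlzs
    have hlzs' : |d - deriv f (z - s)| ≤ |d| := by
      rw [← hd] at hlzs
      calc |d - deriv f (z - s)| ≤ L * (|d| / L) := hlzs
        _ = |d| := by field_simp
    set e := deriv f (z - s) with he
    have h1 : (d - e) ^ 2 ≤ d ^ 2 := by
      nlinarith [abs_nonneg (d - e), abs_nonneg d, sq_abs (d - e), sq_abs d]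
    have hde : 0 ≤ d * e := by nlinarith [sq_nonneg e]
    have hse : 0 ≤ e * s := by
      rw [hs]
      have : (0:ℝ) < 1 / L := by positivity
      nlinarith
    nlinarith
  · -- |z - s - xstar| ≤ |z - xstar|
    rw [hx2]
    have hderiv0 : deriv f xstar = 0 := by
      have hloc : IsLocalMin f xstar := hmin.isLocalMin (by simp)
      exact hloc.deriv_eq_zero
    have hmono : MonotoneOn (deriv f) Set.univ :=
      hconv.monotoneOn_deriv fun w _ => (hdiff w)
    set D := z - xstar with hD
    have hlz := hlip z xstar
    rw [hderiv0, sub_zero, ← hd, ← hD] at hlz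
    -- same sign : 0 ≤ d * D
    have hdD : 0 ≤ d * D := by
      rcases le_total xstar z with h | h
      · have : deriv f xstar ≤ deriv f z :=
          hmono (Set.mem_univ xstar) (Set.mem_univ z) h
        rw [hderiv0] at this
        have : 0 ≤ d := this
        have : 0 ≤ D := by rw [hD]; linarith
        positivity
      · have hdle : deriv f z ≤ deriv f xstar :=
          hmono (Set.mem_univ z) (Set.mem_univ xstar) h
        rw [hderiv0] at hdle
        have hDle : D ≤ 0 := by rw [hD]; linarith
        nlinarith
    have hsq : d ^ 2 ≤ 2 * L * (d * D) := by
      have h1 : |d| * |d| ≤ (L * |D|) * |d| :=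
        mul_le_mul_of_nonneg_right hlz (abs_nonneg d)
      have h2 : |D| * |d| = d * D := by
        rw [← abs_mul, abs_of_nonneg (by nlinarith : 0 ≤ D * d)]; ring
      nlinarith [sq_abs d, abs_nonneg d, abs_nonneg D]
    have hgoal : (z - 1 / L * d - xstar) ^ 2 ≤ D ^ 2 := by
      have hz' : z - 1 / L * d - xstar = D - d / L := by rw [hD]; ring
      rw [hz']
      have hL2 : (0:ℝ) < L ^ 2 := by positivity
      have : (D - d / L) ^ 2 = D ^ 2 - (2 * L * (d * D) - d ^ 2) / L ^ 2 := by
        field_simp; ring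
      rw [this]
      have : 0 ≤ (2 * L * (d * D) - d ^ 2) / L ^ 2 := by
        apply div_nonneg (by linarith) (le_of_lt hL2)
      linarith
    exact sq_le_sq.mp hgoal
end

section
/- Let (x_k), (y_k), (t_k) be generated by Algorithm 1 started at x_0. Suppose r is the first iteration at which the restart condition f'(y_r)·(x_{r+1} − x_r) > 0 is satisfied, and r̄ > r is the second such iteration. Then for every k with r + 3 ≤ k ≤ r̄ + 1 one has f(x_k) − f* ≤ (4 / ((k − r)(r + 2)))² · (L/2)·(x_0 − x*)² ≤ 2L(x_0 − x*)² / (k+1)². -/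
open Filter Finset

/-!
Between two restarts the method is plain AGD, and its Lyapunov function
`t_j² (f x_{j+1} - f z) + L/2 (t_j x_{j+1} - (t_j - 1) x_j - z)²` does not increase, for every
minimizer `z`. On the first run this gives `|u - x*| ≤ |x_0 - x*|` for
`u = t_{r-1} x_r - (t_{r-1} - 1) x_{r-1}`.

At the restart, say `f'(y_r) > 0` (the other sign is the mirror image), the step
`x_{r+1} - x_r` and the momentum `x_r - x_{r-1}` are both positive. In one dimension a gradient
step never jumps over a minimizer, so some minimizer `z ≥ x*` lies in `[x_r, x_{r+1}]`, and
`t_r (x_{r+1} - z) ≤ (t_{r-1} - 1)(x_r - x_{r-1}) + x_r - z ≤ u - x*`. The second run starts at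
`x_{r+1}`, and with `t_j ≥ (j + 2)/2` its Lyapunov bound becomes the claim. Since `y = x` at
iterations 0 and 1, no restart happens there, so `r ≥ 2`, which gives the second inequality.
-/

theorem ConvexOn.add_deriv_mul_sub_le {f : ℝ → ℝ} (hf : ConvexOn ℝ Set.univ f)
    (hd : Differentiable ℝ f) (x y : ℝ) : f x + deriv f x * (y - x) ≤ f y := by
  rcases lt_trichotomy x y with h | rfl | h
  · have hs := hf.deriv_le_slope (Set.mem_univ x) (Set.mem_univ y) h (hd x)
    rw [slope_def_field, le_div_iff₀ (sub_pos.2 h)] at hs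
    linarith
  · simp
  · have hs := hf.slope_le_deriv (Set.mem_univ y) (Set.mem_univ x) h (hd x)
    rw [slope_def_field, div_le_iff₀ (sub_pos.2 h)] at hs
    linarith

theorem ConvexOn.isMinOn_of_deriv_eq_zero {f : ℝ → ℝ} (hf : ConvexOn ℝ Set.univ f)
    (hd : Differentiable ℝ f) {x : ℝ} (hx : deriv f x = 0) : IsMinOn f Set.univ x :=
  isMinOn_iff.2 fun y _ => by simpa [hx] using hf.add_deriv_mul_sub_le hd x y

/-- The descent lemma: `u ↦ L/2 u² - f u` has monotone derivative, so it lies above its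
tangent lines. -/
theorem le_add_deriv_mul_sub_add_sq {L : ℝ} {f : ℝ → ℝ} (hd : Differentiable ℝ f)
    (hlip : ∀ a b, |deriv f a - deriv f b| ≤ L * |a - b|) (a b : ℝ) :
    f b ≤ f a + deriv f a * (b - a) + L / 2 * (b - a) ^ 2 := by
  set h : ℝ → ℝ := fun u => L / 2 * u ^ 2 - f u
  have hderiv : ∀ u, HasDerivAt h (L * u - deriv f u) u := fun u =>
    ((((hasDerivAt_id u).pow 2).const_mul (L / 2)).fun_sub (hd u).hasDerivAt).congr_deriv
      (by simp; ring)
  have hdiff : Differentiable ℝ h := fun u => (hderiv u).differentiableAt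
  have hmono : Monotone (deriv h) := fun u v huv => by
    rw [(hderiv u).deriv, (hderiv v).deriv]
    have := (abs_le.1 (hlip v u)).2
    rw [abs_of_nonneg (sub_nonneg.2 huv)] at this
    linarith
  have := (hmono.convexOn_univ_of_deriv hdiff).add_deriv_mul_sub_le hdiff a b
  rw [(hderiv a).deriv] at this
  linear_combination this

theorem isMinOn_comp_neg_iff {f : ℝ → ℝ} {z : ℝ} :
    IsMinOn (fun w => f (-w)) Set.univ z ↔ IsMinOn f Set.univ (-z) := by
  simp only [isMinOn_iff, Set.mem_univ, true_implies]
  exact ⟨fun h w => by simpa using h (-w), fun h w => h (-w)⟩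

theorem gradStep_comp_neg (L : ℝ) (f : ℝ → ℝ) (y : ℝ) :
    gradStep L (fun w => f (-w)) y = -gradStep L f (-y) := by
  simp only [gradStep, deriv_comp_neg]
  ring

theorem mul_sub_gradStep {L : ℝ} (hL : L ≠ 0) (f : ℝ → ℝ) (y : ℝ) :
    L * (y - gradStep L f y) = deriv f y := by
  simp only [gradStep]
  field_simp
  ring

structure IsSmoothConvex (L : ℝ) (f : ℝ → ℝ) : Prop where
  convexOn : ConvexOn ℝ Set.univ f
  differentiable : Differentiable ℝ f
  abs_deriv_sub_le : ∀ a b, |deriv f a - deriv f b| ≤ L * |a - b|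

namespace IsSmoothConvex

variable {L : ℝ} {f : ℝ → ℝ}

theorem comp_neg (hf : IsSmoothConvex L f) : IsSmoothConvex L (fun w => f (-w)) where
  convexOn := by
    simpa [Function.comp_def] using hf.convexOn.comp_linearMap (-LinearMap.id (R := ℝ))
  differentiable := hf.differentiable.comp differentiable_neg
  abs_deriv_sub_le a b := by
    simpa [deriv_comp_neg, abs_sub_comm, neg_add_eq_sub] using hf.abs_deriv_sub_le (-a) (-b)

theorem monotone_deriv (hf : IsSmoothConvex L f) : Monotone (deriv f) := fun a b hab =>
  hf.convexOn.monotoneOn_deriv (fun w _ => hf.differentiable w) (Set.mem_univ a)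
    (Set.mem_univ b) hab

theorem gradStep_sub_le (hf : IsSmoothConvex L f) (hL : 0 < L) (y u : ℝ) :
    f (gradStep L f y) - f u ≤ L / 2 * ((y - u) ^ 2 - (gradStep L f y - u) ^ 2) := by
  have hdescent := le_add_deriv_mul_sub_add_sq hf.differentiable hf.abs_deriv_sub_le y
    (gradStep L f y)
  have htangent := hf.convexOn.add_deriv_mul_sub_le hf.differentiable y u
  have hstep := mul_sub_gradStep hL.ne' f y
  linear_combination hdescent + htangent - (gradStep L f y - u) * hstep

theorem le_gradStep_of_deriv_pos (hf : IsSmoothConvex L f) (hL : 0 < L) {z y : ℝ}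
    (hz : IsMinOn f Set.univ z) (hy : 0 < deriv f y) : z ≤ gradStep L f y := by
  have hz' : deriv f z = 0 := (hz.isLocalMin Filter.univ_mem).deriv_eq_zero
  have hzy : z ≤ y := by
    by_contra! hyz
    linarith [hf.monotone_deriv hyz.le]
  have hlip := (abs_le.1 (hf.abs_deriv_sub_le y z)).2
  rw [hz', abs_of_nonneg (sub_nonneg.2 hzy), ← mul_sub_gradStep hL.ne' f y] at hlip
  nlinarith

theorem gradStep_le_or_isMinOn_of_deriv_nonpos (hf : IsSmoothConvex L f) (hL : 0 < L) {z y : ℝ}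
    (hz : IsMinOn f Set.univ z) (hy : deriv f y ≤ 0) :
    gradStep L f y ≤ z ∨ IsMinOn f Set.univ (gradStep L f y) := by
  have hz' : deriv f z = 0 := (hz.isLocalMin Filter.univ_mem).deriv_eq_zero
  rcases le_or_gt y z with hyz | hzy
  · left
    have hlip := (abs_le.1 (hf.abs_deriv_sub_le z y)).2
    rw [hz', abs_of_nonneg (sub_nonneg.2 hyz), zero_sub, ← mul_sub_gradStep hL.ne' f y] at hlip
    nlinarith
  · right
    have hy0 : deriv f y = 0 := le_antisymm hy (hz' ▸ hf.monotone_deriv hzy.le)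
    rw [show gradStep L f y = y by simp [gradStep, hy0]]
    exact hf.convexOn.isMinOn_of_deriv_eq_zero hf.differentiable hy0

theorem exists_isMinOn_of_restart_of_deriv_pos (hf : IsSmoothConvex L f) (hL : 0 < L)
    {xs a b p ym yr tp tr : ℝ} (hxs : IsMinOn f Set.univ xs) (htp : 1 ≤ tp) (htr : 1 ≤ tr)
    (hb : b = gradStep L f ym) (hym : deriv f ym * (b - a) ≤ 0)
    (hyr : yr = b + (tp - 1) / tr * (b - a)) (hp : p = gradStep L f yr)
    (hres : 0 < deriv f yr * (p - b)) (hpos : 0 < deriv f yr) :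
    ∃ z, IsMinOn f Set.univ z ∧ tr * |p - z| ≤ |tp * b - (tp - 1) * a - xs| := by
  have hbp : b < p := sub_pos.1 (pos_of_mul_pos_right hres hpos.le)
  have hpyr : p ≤ yr := by
    have := mul_sub_gradStep hL.ne' f yr
    rw [← hp] at this
    nlinarith
  have hmom : tr * (p - b) ≤ (tp - 1) * (b - a) := by
    have : tr * (yr - b) = (tp - 1) * (b - a) := by
      rw [hyr]; field_simp; ring
    nlinarith
  have hym' : deriv f ym ≤ 0 := by
    have hba : 0 < b - a := by nlinarith
    nlinarith
  have hxsp : xs ≤ p := hp ▸ hf.le_gradStep_of_deriv_pos hL hxs hpos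
  obtain ⟨z, hz, hbz, hxsz, hzp⟩ : ∃ z, IsMinOn f Set.univ z ∧ b ≤ z ∧ xs ≤ z ∧ z ≤ p := by
    rcases le_or_gt b xs with hbxs | hxsb
    · exact ⟨xs, hxs, hbxs, le_rfl, hxsp⟩
    · rcases hb ▸ hf.gradStep_le_or_isMinOn_of_deriv_nonpos hL hxs hym' with h | h
      · exact absurd (hb ▸ h) hxsb.not_ge
      · exact ⟨b, hb ▸ h, le_rfl, hxsb.le, hbp.le⟩
  refine ⟨z, hz, ?_⟩
  calc tr * |p - z| = tr * (p - b) - tr * (z - b) := by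
        rw [abs_of_nonneg (sub_nonneg.2 hzp)]; ring
    _ ≤ (tp - 1) * (b - a) - (z - b) := by nlinarith
    _ ≤ tp * b - (tp - 1) * a - xs := by linarith
    _ ≤ |tp * b - (tp - 1) * a - xs| := le_abs_self _

/-- With `a, b, p = x_{r-1}, x_r, x_{r+1}`, `ym, yr = y_{r-1}, y_r` and `tp, tr = t_{r-1}, t_r`,
this is the restart at iteration `r`. -/
theorem exists_isMinOn_of_restart (hf : IsSmoothConvex L f) (hL : 0 < L)
    {xs a b p ym yr tp tr : ℝ} (hxs : IsMinOn f Set.univ xs) (htp : 1 ≤ tp) (htr : 1 ≤ tr)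
    (hb : b = gradStep L f ym) (hym : deriv f ym * (b - a) ≤ 0)
    (hyr : yr = b + (tp - 1) / tr * (b - a)) (hp : p = gradStep L f yr)
    (hres : 0 < deriv f yr * (p - b)) :
    ∃ z, IsMinOn f Set.univ z ∧ tr * |p - z| ≤ |tp * b - (tp - 1) * a - xs| := by
  rcases lt_or_gt_of_ne (left_ne_zero_of_mul hres.ne') with hneg | hpos
  · obtain ⟨z, hz, hle⟩ := hf.comp_neg.exists_isMinOn_of_restart_of_deriv_pos hL
      (xs := -xs) (a := -a) (b := -b) (p := -p) (ym := -ym) (yr := -yr)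
      (isMinOn_comp_neg_iff.2 (by simpa using hxs)) htp htr
      (by simp [gradStep_comp_neg, hb]) (by simp [deriv_comp_neg]; linarith)
      (by rw [hyr]; ring) (by simp [gradStep_comp_neg, hp])
      (by simp only [deriv_comp_neg, neg_neg]; linarith) (by simpa [deriv_comp_neg])
    refine ⟨-z, isMinOn_comp_neg_iff.1 hz, ?_⟩
    calc tr * |p - -z| = tr * |-p - z| := by rw [← abs_neg]; ring_nf
      _ ≤ |tp * -b - (tp - 1) * -a - -xs| := hle
      _ = |tp * b - (tp - 1) * a - xs| := by rw [← abs_neg]; ring_nf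
  · exact hf.exists_isMinOn_of_restart_of_deriv_pos hL hxs htp htr hb hym hyr hp hres hpos

theorem energy_step (hf : IsSmoothConvex L f) (hL : 0 < L) {z a b Y tp t : ℝ}
    (hz : IsMinOn f Set.univ z) (ht : 1 ≤ t) (hts : t ^ 2 - t ≤ tp ^ 2)
    (hY : Y = b + (tp - 1) / t * (b - a)) :
    t ^ 2 * (f (gradStep L f Y) - f z) + L / 2 * (t * gradStep L f Y - (t - 1) * b - z) ^ 2 ≤
      tp ^ 2 * (f b - f z) + L / 2 * (tp * b - (tp - 1) * a - z) ^ 2 := by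
  set p := gradStep L f Y
  have hYb := mul_le_mul_of_nonneg_left (hf.gradStep_sub_le hL Y b)
    (by nlinarith : 0 ≤ t * (t - 1))
  have hYz := mul_le_mul_of_nonneg_left (hf.gradStep_sub_le hL Y z) (by linarith : 0 ≤ t)
  have hfb := mul_le_mul_of_nonneg_right hts (sub_nonneg.2 (hz (Set.mem_univ b)))
  have htY : t * Y - (t - 1) * b = tp * b - (tp - 1) * a := by
    rw [hY]; field_simp; ring
  calc t ^ 2 * (f p - f z) + L / 2 * (t * p - (t - 1) * b - z) ^ 2
      = t * (t - 1) * (f p - f b) + t * (f p - f z) + (t ^ 2 - t) * (f b - f z)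
        + L / 2 * (t * p - (t - 1) * b - z) ^ 2 := by ring
    _ ≤ t * (t - 1) * (L / 2 * ((Y - b) ^ 2 - (p - b) ^ 2))
        + t * (L / 2 * ((Y - z) ^ 2 - (p - z) ^ 2)) + tp ^ 2 * (f b - f z)
        + L / 2 * (t * p - (t - 1) * b - z) ^ 2 := by linarith
    _ = tp ^ 2 * (f b - f z) + L / 2 * (t * Y - (t - 1) * b - z) ^ 2 := by ring
    _ = tp ^ 2 * (f b - f z) + L / 2 * (tp * b - (tp - 1) * a - z) ^ 2 := by rw [htY]

end IsSmoothConvex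

theorem ParamSeq.one_le {s : ℕ → ℝ} (hs : ParamSeq s) (k : ℕ) : 1 ≤ s k := by
  have := (hs.2 k).1
  have : (0 : ℝ) ≤ k := k.cast_nonneg
  linarith

/-- `u, v` are the iterates `x, y` of AGD with parameters `s` over `n` steps without restart. -/
def IsAGDRun (L : ℝ) (f : ℝ → ℝ) (s u v : ℕ → ℝ) (n : ℕ) : Prop :=
  v 0 = u 0 ∧ (∀ j, u (j + 1) = gradStep L f (v j)) ∧
    ∀ j, j + 2 ≤ n → v (j + 1) = u (j + 1) + (s j - 1) / s (j + 1) * (u (j + 1) - u j)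

namespace IsAGDRun

variable {L : ℝ} {f : ℝ → ℝ} {s u v : ℕ → ℝ} {n : ℕ} {z : ℝ}

theorem energy_le (hrun : IsAGDRun L f s u v n) (hf : IsSmoothConvex L f) (hL : 0 < L)
    (hs : ParamSeq s) (hz : IsMinOn f Set.univ z) :
    ∀ j < n, s j ^ 2 * (f (u (j + 1)) - f z) + L / 2 * (s j * u (j + 1) - (s j - 1) * u j - z) ^ 2
      ≤ L / 2 * (u 0 - z) ^ 2 := by
  obtain ⟨hv0, hstep, hmom⟩ := hrun
  intro j
  induction j with
  | zero =>
    intro _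
    have := hf.gradStep_sub_le hL (v 0) z
    rw [← hstep, hv0] at this
    rw [hs.1]
    linarith
  | succ j ih =>
    intro hj
    rw [hstep (j + 1)]
    exact (hf.energy_step hL hz (hs.one_le _) (hs.2 j).2 (hmom j (by omega))).trans
      (ih (by omega))

theorem sq_le (hrun : IsAGDRun L f s u v n) (hf : IsSmoothConvex L f) (hL : 0 < L)
    (hs : ParamSeq s) (hz : IsMinOn f Set.univ z) {j : ℕ} (hj : j < n) :
    (s j * u (j + 1) - (s j - 1) * u j - z) ^ 2 ≤ (u 0 - z) ^ 2 := by
  have := hrun.energy_le hf hL hs hz j hj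
  have : f z ≤ f (u (j + 1)) := hz (Set.mem_univ _)
  have := sq_nonneg (s j)
  nlinarith

theorem mul_sub_le (hrun : IsAGDRun L f s u v n) (hf : IsSmoothConvex L f) (hL : 0 < L)
    (hs : ParamSeq s) (hz : IsMinOn f Set.univ z) {j : ℕ} (hj : j < n) :
    s j ^ 2 * (f (u (j + 1)) - f z) ≤ L / 2 * (u 0 - z) ^ 2 := by
  have := hrun.energy_le hf hL hs hz j hj
  have := sq_nonneg (s j * u (j + 1) - (s j - 1) * u j - z)
  nlinarith

end IsAGDRun

theorem IsAlgo1.isAGDRun {L : ℝ} {f : ℝ → ℝ} {tt : ℕ → ℝ} {x0 : ℝ} {x y t : ℕ → ℝ}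
    (halg : IsAlgo1 L f tt x0 x y t) {s n : ℕ}
    (hs : s = 0 ∨ ∃ k, s = k + 1 ∧ RestartAt f x y k)
    (hno : ∀ j, s ≤ j → j + 2 ≤ s + n → ¬ RestartAt f x y j) :
    IsAGDRun L f tt (fun i => x (i + s)) (fun i => y (i + s)) n := by
  obtain ⟨hx0, hy0, hstep, c, hc0, htc, hbr⟩ := halg
  have hstart : y s = x s ∧ c s = 0 := by
    rcases hs with rfl | ⟨k, rfl, hk⟩
    · exact ⟨hy0.trans hx0.symm, hc0⟩
    · exact (hbr k).2 hk
  have hmom (j : ℕ) (hj : j + 2 ≤ n) := (hbr (j + s)).1 (not_lt.1 (hno _ (by omega) (by omega)))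
  have hc : ∀ m, m + 1 ≤ n → c (m + s) = m := by
    intro m
    induction m with
    | zero => intro _; simpa using hstart.2
    | succ m ih => intro hm; rw [add_right_comm, (hmom m (by omega)).2, ih (by omega)]
  refine ⟨by simpa using hstart.1, fun j => by simpa [add_right_comm] using hstep (j + s),
    fun j hj => ?_⟩
  simp only [add_right_comm j 1 s]
  rw [(hmom j hj).1, htc, htc, add_right_comm, hc j (by omega), hc (j + 1) (by omega)]

theorem not_restartAt_of_eq {L : ℝ} (hL : 0 < L) {f : ℝ → ℝ} {x y : ℕ → ℝ} {k : ℕ}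
    (hx : x (k + 1) = gradStep L f (y k)) (hk : y k = x k) : ¬ RestartAt f x y k := by
  have := mul_sub_gradStep hL.ne' f (y k)
  rw [← hx, hk] at this
  unfold RestartAt
  rw [hk, ← this]
  nlinarith [sq_nonneg (x k - x (k + 1))]

theorem le_four_div_mul_sq_mul_of_le {g c P Q T T' d e B : ℝ} (hg : 0 ≤ g) (hc : 0 ≤ c)
    (hP : 0 < P) (hQ : 0 < Q) (hT : P ≤ 2 * T) (hT' : Q ≤ 2 * T') (h₁ : T ^ 2 * g ≤ c * d ^ 2)
    (h₂ : T' * |d| ≤ |e|) (h₃ : e ^ 2 ≤ B) : g ≤ (4 / (P * Q)) ^ 2 * c * B := by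
  have key : (P * Q) ^ 2 * g ≤ 16 * (c * B) :=
    calc (P * Q) ^ 2 * g ≤ (2 * T * (2 * T')) ^ 2 * g := by gcongr; linarith
      _ = 16 * T' ^ 2 * (T ^ 2 * g) := by ring
      _ ≤ 16 * T' ^ 2 * (c * d ^ 2) := by gcongr
      _ = 16 * c * (T' * |d|) ^ 2 := by rw [mul_pow, sq_abs]; ring
      _ ≤ 16 * c * |e| ^ 2 := by gcongr; exact mul_nonneg (by linarith) (abs_nonneg d)
      _ ≤ 16 * (c * B) := by rw [sq_abs]; nlinarith
  rw [div_pow, div_mul_eq_mul_div, div_mul_eq_mul_div, le_div_iff₀ (by positivity)]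
  linarith

theorem four_div_sub_mul_add_two_sq_le {r k : ℕ} (hr : 2 ≤ r) (hk : r + 3 ≤ k) :
    (4 / (((k : ℝ) - r) * (r + 2))) ^ 2 ≤ 4 / ((k : ℝ) + 1) ^ 2 := by
  have hr' : (2 : ℝ) ≤ r := by exact_mod_cast hr
  have hk' : (r : ℝ) + 3 ≤ k := by exact_mod_cast hk
  have key : 2 * ((k : ℝ) + 1) ≤ (k - r) * (r + 2) := by nlinarith
  rw [div_pow, div_le_div_iff₀ (by nlinarith) (by positivity)]
  nlinarith
theorem stmt5_general
    (L : ℝ) (hL : 0 < L) (f : ℝ → ℝ)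
    (hconv : ConvexOn ℝ Set.univ f) (hdiff : Differentiable ℝ f)
    (hlip : ∀ a b : ℝ, |deriv f a - deriv f b| ≤ L * |a - b|)
    (tt : ℕ → ℝ) (htt : ParamSeq tt)
    (x0 : ℝ) (x y t : ℕ → ℝ) (halg : IsAlgo1 L f tt x0 x y t)
    (xstar : ℝ) (hmin : IsMinOn f Set.univ xstar)
    (r rbar : ℕ)
    (hnores : ∀ j < r, ¬ RestartAt f x y j) (hres : RestartAt f x y r)
    (hbetween : ∀ j, r < j → j < rbar → ¬ RestartAt f x y j) :
    ∀ k : ℕ, r + 3 ≤ k → k ≤ rbar + 1 →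
      f (x k) - f xstar ≤
          (4 / (((k : ℝ) - (r : ℝ)) * ((r : ℝ) + 2))) ^ 2 * (L / 2) * (x0 - xstar) ^ 2 ∧
      (4 / (((k : ℝ) - (r : ℝ)) * ((r : ℝ) + 2))) ^ 2 * (L / 2) * (x0 - xstar) ^ 2 ≤
          2 * L * (x0 - xstar) ^ 2 / ((k : ℝ) + 1) ^ 2 := by
  intro k hk hk'
  have hf : IsSmoothConvex L f := ⟨hconv, hdiff, hlip⟩
  have hstep := halg.2.2.1
  have run₁ := halg.isAGDRun (s := 0) (n := r + 1) (Or.inl rfl) fun j _ _ => hnores j (by omega)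
  have hr : 2 ≤ r := by
    by_contra! hr
    refine not_restartAt_of_eq hL (hstep r) ?_ hres
    interval_cases r
    · exact halg.2.1.trans halg.1.symm
    · simpa [htt.1] using run₁.2.2 0 le_rfl
  obtain ⟨m, rfl⟩ : ∃ m, r = m + 1 := ⟨r - 1, by omega⟩
  obtain ⟨z, hz, hzdist⟩ := hf.exists_isMinOn_of_restart hL hmin (htt.one_le m)
    (htt.one_le (m + 1)) (hstep m) (not_lt.1 (hnores m (by omega))) (run₁.2.2 m le_rfl)
    (hstep (m + 1)) hres
  have run₂ := halg.isAGDRun (s := m + 2) (n := rbar - m - 1) (Or.inr ⟨m + 1, rfl, hres⟩)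
    fun j _ _ => hbetween j (by omega) (by omega)
  obtain ⟨j, rfl⟩ : ∃ j, k = j + 1 + (m + 2) := ⟨k - (m + 3), by omega⟩
  have hfz : f z = f xstar := le_antisymm (hz (Set.mem_univ _)) (hmin (Set.mem_univ _))
  have hgap := run₂.mul_sub_le hf hL htt hz (j := j) (by omega)
  have hdist := run₁.sq_le hf hL htt hmin (j := m) (by omega)
  simp only [zero_add, add_zero, hfz, halg.1] at hgap hdist
  have hcast : ((j + 1 + (m + 2) : ℕ) : ℝ) - ((m + 1 : ℕ) : ℝ) = j + 2 := by push_cast; ring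
  refine ⟨le_four_div_mul_sq_mul_of_le (sub_nonneg.2 (hmin (Set.mem_univ _))) (by positivity)
    ?_ (by positivity) ?_ ?_ hgap hzdist hdist, ?_⟩
  · rw [hcast]; positivity
  · rw [hcast]; linarith [(htt.2 j).1]
  · have := (htt.2 (m + 1)).1; push_cast at this ⊢; linarith
  · calc _ ≤ 4 / ((j + 1 + (m + 2) : ℕ) + 1 : ℝ) ^ 2 * (L / 2) * (x0 - xstar) ^ 2 := by
          gcongr; exact four_div_sub_mul_add_two_sq_le hr (by omega)
      _ = _ := by ring

theorem stmt5
    (L : ℝ) (hL : 0 < L) (f : ℝ → ℝ)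
    (hconv : ConvexOn ℝ Set.univ f) (hdiff : Differentiable ℝ f)
    (hlip : ∀ a b : ℝ, |deriv f a - deriv f b| ≤ L * |a - b|)
    (tt : ℕ → ℝ) (htt : ParamSeq tt)
    (x0 : ℝ) (x y t : ℕ → ℝ) (halg : IsAlgo1 L f tt x0 x y t)
    (xstar : ℝ) (hmin : IsMinOn f Set.univ xstar)
    (hproj : ∀ z : ℝ, IsMinOn f Set.univ z → |x0 - xstar| ≤ |x0 - z|)
    (r rbar : ℕ) (hrr : r < rbar)
    (hnores : ∀ j < r, ¬ RestartAt f x y j) (hres : RestartAt f x y r)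
    (hbetween : ∀ j, r < j → j < rbar → ¬ RestartAt f x y j)
    (hres2 : RestartAt f x y rbar) :
    ∀ k : ℕ, r + 3 ≤ k → k ≤ rbar + 1 →
      f (x k) - f xstar ≤
          (4 / (((k : ℝ) - (r : ℝ)) * ((r : ℝ) + 2))) ^ 2 * (L / 2) * (x0 - xstar) ^ 2 ∧
      (4 / (((k : ℝ) - (r : ℝ)) * ((r : ℝ) + 2))) ^ 2 * (L / 2) * (x0 - xstar) ^ 2 ≤
          2 * L * (x0 - xstar) ^ 2 / ((k : ℝ) + 1) ^ 2 :=
  stmt5_general L hL f hconv hdiff hlip tt htt x0 x y t halg xstar hmin r rbar hnores hres hbetween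
end

section
/- Let (x_k), (y_k) be generated by Algorithm 1 started at x_0. Suppose y_{K_0} = x_{K_0} for some index K_0 (e.g. K_0 = 0, or K_0 = r + 1 immediately after a restart at iteration r), that the restart condition is not satisfied at any of the iterations K_0, K_0 + 1, …, K − 1 for some K > K_0, and that f'(x_k) ≠ 0 for all k ∈ {K_0, …, K}. Then: if f'(x_{K_0}) < 0, one has f'(y_k) < 0 and x_{k+1} > x_k for all k ∈ {K_0, …, K − 1}; if f'(x_{K_0}) > 0, one has f'(y_k) > 0 and x_{k+1} < x_k for all k ∈ {K_0, …, K − 1}. In particular, between two consecutive restarts the iterates x_k are totally ordered (monotone). -/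
open Filter Finset

lemma derivMonoAux (f : ℝ → ℝ) (hconv : ConvexOn ℝ Set.univ f)
    (hdiff : Differentiable ℝ f) : Monotone (deriv f) := by
  intro a b hab
  rcases hab.eq_or_lt with h | h
  · rw [h]
  · calc deriv f a ≤ slope f a b :=
        hconv.deriv_le_slope (Set.mem_univ a) (Set.mem_univ b) h (hdiff a)
    _ ≤ deriv f b := hconv.slope_le_deriv (Set.mem_univ a) (Set.mem_univ b) h (hdiff b)

lemma stmt9_aux
    (L : ℝ) (hL : 0 < L) (f : ℝ → ℝ)
    (hconv : ConvexOn ℝ Set.univ f) (hdiff : Differentiable ℝ f)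
    (hlip : ∀ a b : ℝ, |deriv f a - deriv f b| ≤ L * |a - b|)
    (tt : ℕ → ℝ) (htt : ParamSeq tt)
    (x0 : ℝ) (x y t : ℕ → ℝ) (halg : IsAlgo1 L f tt x0 x y t)
    (K0 K : ℕ) (hK : K0 < K) (hyx : y K0 = x K0)
    (hnores : ∀ j, K0 ≤ j → j < K → ¬ RestartAt f x y j)
    (hgrad : ∀ k, K0 ≤ k → k ≤ K → deriv f (x k) ≠ 0)
    (ε : ℝ) (hε : ε = 1 ∨ ε = -1) (h0 : ε * deriv f (x K0) < 0) :
    ∀ k, K0 ≤ k → k < K → ε * deriv f (y k) < 0 ∧ 0 < ε * (x (k + 1) - x k) := by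
  obtain ⟨hx0, hy0, hstep, c, hc0, htc, hupd⟩ := halg
  have hmono := derivMonoAux f hconv hdiff
  have hL' : 0 < 1 / L := by positivity
  have ht1 : ∀ j, (1 : ℝ) ≤ t j := by
    intro j
    rw [htc j]
    have h := (htt.2 (c j)).1
    have : (0 : ℝ) ≤ (c j : ℝ) := Nat.cast_nonneg _
    linarith
  -- step formula
  have hxs : ∀ j, x (j + 1) = y j - (1 / L) * deriv f (y j) := fun j => hstep j
  -- Lipschitz consequence 1
  have hLip1 : ∀ j, ε * deriv f (y j) < 0 → ε * deriv f (x (j + 1)) ≤ 0 := by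
    intro j hj
    have h1 := hlip (x (j + 1)) (y j)
    rw [hxs j] at h1 ⊢
    have h2 : |y j - (1 / L) * deriv f (y j) - y j| = (1 / L) * |deriv f (y j)| := by
      rw [show y j - (1 / L) * deriv f (y j) - y j = -((1/L) * deriv f (y j)) by ring,
        abs_neg, abs_mul, abs_of_pos hL']
    rw [h2] at h1
    have h3 : L * ((1 / L) * |deriv f (y j)|) = |deriv f (y j)| := by
      field_simp
    rw [h3] at h1
    rcases hε with h | h <;> subst h <;>
      rcases abs_cases (deriv f (y j)) with ⟨ha, hb⟩ | ⟨ha, hb⟩ <;>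
      rcases abs_cases (deriv f (y j - (1 / L) * deriv f (y j)) - deriv f (y j)) with
        ⟨hc', hd⟩ | ⟨hc', hd⟩ <;> linarith
  -- Lipschitz consequence 2
  have hLip2 : ∀ j, 0 < ε * deriv f (y j) → 0 ≤ ε * deriv f (x (j + 1)) := by
    intro j hj
    have h1 := hlip (x (j + 1)) (y j)
    rw [hxs j] at h1 ⊢
    have h2 : |y j - (1 / L) * deriv f (y j) - y j| = (1 / L) * |deriv f (y j)| := by
      rw [show y j - (1 / L) * deriv f (y j) - y j = -((1/L) * deriv f (y j)) by ring,
        abs_neg, abs_mul, abs_of_pos hL']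
    rw [h2] at h1
    have h3 : L * ((1 / L) * |deriv f (y j)|) = |deriv f (y j)| := by
      field_simp
    rw [h3] at h1
    rcases hε with h | h <;> subst h <;>
      rcases abs_cases (deriv f (y j)) with ⟨ha, hb⟩ | ⟨ha, hb⟩ <;>
      rcases abs_cases (deriv f (y j - (1 / L) * deriv f (y j)) - deriv f (y j)) with
        ⟨hc', hd⟩ | ⟨hc', hd⟩ <;> linarith
  have hεne : ε ≠ 0 := by rcases hε with h | h <;> simp [h]
  intro k hk
  induction k, hk using Nat.le_induction with
  | base =>
    intro _
    have hy : deriv f (y K0) = deriv f (x K0) := by rw [hyx]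
    constructor
    · rw [hy]; exact h0
    · rw [hxs K0, hyx]
      have : ε * (x K0 - (1 / L) * deriv f (x K0) - x K0) =
          -((1 / L) * (ε * deriv f (x K0))) := by ring
      rw [this]
      nlinarith
  | succ k hk ih =>
    intro hkK
    have hkK' : k < K := Nat.lt_of_succ_lt hkK
    obtain ⟨hyneg, hxinc⟩ := ih hkK'
    have hnr : deriv f (y k) * (x (k + 1) - x k) ≤ 0 :=
      not_lt.mp (hnores k hk hkK')
    obtain ⟨hyk1, -⟩ := (hupd k).1 hnr
    have hβ : 0 ≤ (t k - 1) / t (k + 1) :=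
      div_nonneg (by linarith [ht1 k]) (by linarith [ht1 (k + 1)])
    have hyx1 : 0 ≤ ε * (y (k + 1) - x (k + 1)) := by
      rw [hyk1]
      have : ε * (x (k + 1) + (t k - 1) / t (k + 1) * (x (k + 1) - x k) - x (k + 1)) =
          (t k - 1) / t (k + 1) * (ε * (x (k + 1) - x k)) := by ring
      rw [this]
      exact mul_nonneg hβ hxinc.le
    have hfx1ne : deriv f (x (k + 1)) ≠ 0 :=
      hgrad (k + 1) (by omega) (by omega)
    have hfx1 : ε * deriv f (x (k + 1)) < 0 := by
      rcases (hLip1 k hyneg).lt_or_eq with h | h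
      · exact h
      · exact absurd (by rcases hε with he | he <;> subst he <;> linarith) hfx1ne
    have hfy1 : ε * deriv f (y (k + 1)) < 0 := by
      by_contra hcon
      push_neg at hcon
      rcases hcon.eq_or_lt with h | h
      · -- deriv f (y (k+1)) = 0 so x (k+2) = y (k+1) and deriv at x(k+2) is 0
        have hd0 : deriv f (y (k + 1)) = 0 := by
          rcases hε with he | he <;> subst he <;> linarith
        have : x (k + 2) = y (k + 1) := by rw [hxs (k + 1), hd0]; ring
        exact hgrad (k + 2) (by omega) (by omega) (by rw [this, hd0])
      · -- 0 < ε * deriv f (y (k+1))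
        have hnr1 : deriv f (y (k + 1)) * (x (k + 2) - x (k + 1)) ≤ 0 :=
          not_lt.mp (hnores (k + 1) (by omega) hkK)
        have hΔ : ε * (x (k + 2) - x (k + 1)) ≤ 0 := by
          rcases hε with he | he <;> subst he <;> nlinarith
        have hm : ε * deriv f (x (k + 2)) ≤ ε * deriv f (x (k + 1)) := by
          rcases hε with he | he <;> subst he
          · have : x (k + 2) ≤ x (k + 1) := by linarith
            have := hmono this
            linarith
          · have : x (k + 1) ≤ x (k + 2) := by linarith
            have := hmono this
            linarith
        have := hLip2 (k + 1) h
        linarith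
    refine ⟨hfy1, ?_⟩
    rw [hxs (k + 1)]
    have : ε * (y (k + 1) - 1 / L * deriv f (y (k + 1)) - x (k + 1)) =
        ε * (y (k + 1) - x (k + 1)) - (1 / L) * (ε * deriv f (y (k + 1))) := by ring
    rw [this]
    nlinarith

theorem stmt9
    (L : ℝ) (hL : 0 < L) (f : ℝ → ℝ)
    (hconv : ConvexOn ℝ Set.univ f) (hdiff : Differentiable ℝ f)
    (hlip : ∀ a b : ℝ, |deriv f a - deriv f b| ≤ L * |a - b|)
    (tt : ℕ → ℝ) (htt : ParamSeq tt)
    (x0 : ℝ) (x y t : ℕ → ℝ) (halg : IsAlgo1 L f tt x0 x y t)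
    (K0 K : ℕ) (hK : K0 < K) (hyx : y K0 = x K0)
    (hnores : ∀ j, K0 ≤ j → j < K → ¬ RestartAt f x y j)
    (hgrad : ∀ k, K0 ≤ k → k ≤ K → deriv f (x k) ≠ 0) :
    (deriv f (x K0) < 0 →
      ∀ k, K0 ≤ k → k < K → deriv f (y k) < 0 ∧ x k < x (k + 1)) ∧
    (0 < deriv f (x K0) →
      ∀ k, K0 ≤ k → k < K → 0 < deriv f (y k) ∧ x (k + 1) < x k) := by
  constructor
  · intro h0 k hk1 hk2
    have h := stmt9_aux L hL f hconv hdiff hlip tt htt x0 x y t halg K0 K hK hyx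
      hnores hgrad 1 (Or.inl rfl) (by linarith) k hk1 hk2
    exact ⟨by linarith [h.1], by linarith [h.2]⟩
  · intro h0 k hk1 hk2
    have h := stmt9_aux L hL f hconv hdiff hlip tt htt x0 x y t halg K0 K hK hyx
      hnores hgrad (-1) (Or.inr rfl) (by linarith) k hk1 hk2
    exact ⟨by linarith [h.1], by linarith [h.2]⟩
end

section
/- For every y ∈ ℝ and every minimizer x* ∈ S of f, one has |T(y) − x*| ≤ |y − x*|; that is, a gradient step of size 1/L does not move the point farther from any minimizer. -/
theorem stmt11
    (L : ℝ) (hL : 0 < L) (f : ℝ → ℝ)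
    (hconv : ConvexOn ℝ Set.univ f) (hdiff : Differentiable ℝ f)
    (hlip : ∀ a b : ℝ, |deriv f a - deriv f b| ≤ L * |a - b|)
    (y xstar : ℝ) (hmin : IsMinOn f Set.univ xstar) :
    |gradStep L f y - xstar| ≤ |y - xstar| := by
  have hmono : MonotoneOn (deriv f) Set.univ :=
    hconv.monotoneOn_deriv (fun x _ => hdiff x)
  have hd0 : deriv f xstar = 0 := by
    have h : IsLocalMin f xstar :=
      Filter.Eventually.of_forall fun x => hmin (Set.mem_univ x)
    exact h.deriv_eq_zero
  set g := deriv f y with hg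
  have hlip' : |g| ≤ L * |y - xstar| := by
    have := hlip y xstar
    rwa [hd0, sub_zero] at this
  -- key: g² ≤ L * (g * (y - xstar))
  have hkey : g * g ≤ L * (g * (y - xstar)) := by
    rcases le_total xstar y with h | h
    · have hgnn : 0 ≤ g := by
        have := hmono (Set.mem_univ xstar) (Set.mem_univ y) h
        rwa [hd0] at this
      have h1 : g ≤ L * (y - xstar) := by
        have := hlip'
        rwa [abs_of_nonneg hgnn, abs_of_nonneg (sub_nonneg.mpr h)] at this
      nlinarith
    · have hgnp : g ≤ 0 := by
        have := hmono (Set.mem_univ y) (Set.mem_univ xstar) h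
        rwa [hd0] at this
      have h1 : -g ≤ L * (xstar - y) := by
        have := hlip'
        rwa [abs_of_nonpos hgnp, abs_of_nonpos (sub_nonpos.mpr h), neg_sub] at this
      nlinarith
  rw [← Real.sqrt_sq_eq_abs, ← Real.sqrt_sq_eq_abs]
  apply Real.sqrt_le_sqrt
  have hL' : (0:ℝ) < L * L := mul_pos hL hL
  unfold gradStep
  rw [← hg]
  have expand : (y - 1 / L * g - xstar) ^ 2
      = (y - xstar) ^ 2 - (2 / L) * (g * (y - xstar)) + (1 / (L * L)) * (g * g) := by
    field_simp
    ring
  rw [expand]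
  have h2 : (1 / (L * L)) * (g * g) ≤ (1 / L) * (g * (y - xstar)) := by
    rw [div_mul_eq_mul_div, div_mul_eq_mul_div, div_le_div_iff₀ hL' hL]
    calc 1 * (g * g) * L = g * g * L := by ring
      _ ≤ L * (g * (y - xstar)) * L := by nlinarith
      _ = 1 * (g * (y - xstar)) * (L * L) := by ring
  have hq : 0 ≤ g * (y - xstar) :=
    nonneg_of_mul_nonneg_right (le_trans (mul_self_nonneg g) hkey) hL
  have h3 : 0 ≤ (1 / L) * (g * (y - xstar)) :=
    mul_nonneg (by positivity) hq
  have h4 : (1 / L) * (g * (y - xstar)) ≤ (2 / L) * (g * (y - xstar)) := by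
    have : (2 / L) * (g * (y - xstar)) = 2 * ((1 / L) * (g * (y - xstar))) := by ring
    linarith
  linarith
end

section
/- Let n ≥ 1, δ > 0, α > 0. Define h_δ : ℝ → ℝ by h_δ(z) = z²/2 if z ≥ −δ and h_δ(z) = −δz − δ²/2 if z < −δ, and define f : ℝⁿ → ℝ by f(x) = Σ_{i=1}^{n} i·h_δ(x_i) + (α/2)·‖x‖². Then f is α-strongly convex, f is differentiable with (n + α)-Lipschitz gradient, and x = 0 is the unique minimizer of f. -/
/-!
`h_δ` is the Huber function: it is `C¹` with the monotone, 1-Lipschitz derivative `max z (-δ)`,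
and `h_δ ≥ 0 = h_δ 0`. So `f - (α/2)‖·‖²` is a nonnegative combination of convex functions of
single coordinates; `f` is separable, its `i`-th partial derivative `(i+1) max(x_i, -δ) + α x_i`
is `(n + α)`-Lipschitz in `x_i`; and `f x ≥ (α/2)‖x‖²`, which vanishes only at `0 = f 0`.
-/

open Set InnerProductSpace

noncomputable def huber (δ z : ℝ) : ℝ := if -δ ≤ z then z ^ 2 / 2 else -δ * z - δ ^ 2 / 2

section Huber

variable {δ z : ℝ}

theorem huber_of_neg_le (h : -δ ≤ z) : huber δ z = z ^ 2 / 2 := if_pos h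

theorem huber_of_le_neg (h : z ≤ -δ) : huber δ z = -δ * z - δ ^ 2 / 2 := by
  unfold huber
  split_ifs with h'
  · obtain rfl : z = -δ := le_antisymm h h'
    ring
  · rfl

theorem hasDerivAt_huber (δ z : ℝ) : HasDerivAt (huber δ) (max z (-δ)) z := by
  have hq : ∀ y, HasDerivAt (fun y : ℝ => y ^ 2 / 2) y y := fun y => by
    simpa using (hasDerivAt_pow 2 y).div_const 2
  have hl : ∀ y, HasDerivAt (fun y : ℝ => -δ * y - δ ^ 2 / 2) (-δ) y := fun y => by
    simpa using ((hasDerivAt_id y).const_mul (-δ)).sub_const (δ ^ 2 / 2)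
  rcases lt_trichotomy z (-δ) with hz | rfl | hz
  · rw [max_eq_right hz.le]
    exact (hl z).congr_of_eventuallyEq <|
      (eventually_le_nhds hz).mono fun y hy => huber_of_le_neg hy
  · rw [max_self, ← hasDerivWithinAt_univ, ← Iic_union_Ici]
    exact ((hl _).hasDerivWithinAt.congr (fun y hy => huber_of_le_neg hy)
        (huber_of_le_neg le_rfl)).union
      ((hq _).hasDerivWithinAt.congr (fun y hy => huber_of_neg_le hy) (huber_of_neg_le le_rfl))
  · rw [max_eq_left hz.le]
    exact (hq z).congr_of_eventuallyEq <|
      (eventually_ge_nhds hz).mono fun y hy => huber_of_neg_le hy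

theorem convexOn_huber (δ : ℝ) : ConvexOn ℝ univ (huber δ) :=
  Monotone.convexOn_univ_of_deriv (fun z => (hasDerivAt_huber δ z).differentiableAt)
    fun a b hab => by simpa only [(hasDerivAt_huber δ _).deriv] using max_le_max hab le_rfl

theorem huber_nonneg (hδ : 0 ≤ δ) (z : ℝ) : 0 ≤ huber δ z := by
  unfold huber
  split_ifs with h
  · positivity
  · nlinarith

theorem huber_zero (hδ : 0 ≤ δ) : huber δ 0 = 0 := by
  simp [huber_of_neg_le (neg_nonpos.2 hδ)]

theorem abs_mul_max_add_mul_sub_le {c α a b : ℝ} (hc : 0 ≤ c) (hα : 0 ≤ α) :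
    |(c * max a (-δ) + α * a) - (c * max b (-δ) + α * b)| ≤ (c + α) * |a - b| :=
  calc _ = |c * (max a (-δ) - max b (-δ)) + α * (a - b)| := by ring_nf
    _ ≤ c * |max a (-δ) - max b (-δ)| + α * |a - b| := by
        simpa only [abs_mul, abs_of_nonneg hc, abs_of_nonneg hα] using
          abs_add_le (c * (max a (-δ) - max b (-δ))) (α * (a - b))
    _ ≤ (c + α) * |a - b| := by
        nlinarith [abs_max_sub_max_le_abs a b (-δ)]

end Huber

namespace EuclideanSpace

variable {ι : Type*} [Fintype ι]

theorem hasGradientAt_sum_apply {φ : ι → ℝ → ℝ} {d : ι → ℝ} {x : EuclideanSpace ℝ ι}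
    (hφ : ∀ i, HasDerivAt (φ i) (d i) (x i)) :
    HasGradientAt (fun y : EuclideanSpace ℝ ι => ∑ i, φ i (y i)) (WithLp.toLp 2 d) x := by
  have hsum := HasFDerivAt.fun_sum (u := Finset.univ) fun i _ =>
    (hφ i).comp_hasFDerivAt x (proj i : EuclideanSpace ℝ ι →L[ℝ] ℝ).hasFDerivAt
  have hdual : toDual ℝ (EuclideanSpace ℝ ι) (WithLp.toLp 2 d) =
      ∑ i, d i • (proj i : EuclideanSpace ℝ ι →L[ℝ] ℝ) := by
    ext v
    simp [PiLp.inner_apply, mul_comm]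
  rw [hasGradientAt_iff_hasFDerivAt, hdual]
  exact hsum

theorem convexOn_sum_apply {φ : ι → ℝ → ℝ} (hφ : ∀ i, ConvexOn ℝ univ (φ i)) :
    ConvexOn ℝ univ (fun y : EuclideanSpace ℝ ι => ∑ i, φ i (y i)) := by
  have h (i : ι) : ConvexOn ℝ univ fun y : EuclideanSpace ℝ ι => φ i (y i) :=
    (hφ i).comp_linearMap (proj i : EuclideanSpace ℝ ι →L[ℝ] ℝ).toLinearMap
  simpa only [Finset.sum_fn] using Finset.sum_induction _ (ConvexOn ℝ univ)
    (fun _ _ => ConvexOn.add) (convexOn_const 0 convex_univ) fun i _ => h i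

theorem norm_le_mul_norm_of_abs_le {u v : EuclideanSpace ℝ ι} {L : ℝ} (hL : 0 ≤ L)
    (h : ∀ i, |u i| ≤ L * |v i|) : ‖u‖ ≤ L * ‖v‖ := by
  refine le_of_sq_le_sq ?_ (by positivity)
  rw [mul_pow, real_norm_sq_eq, real_norm_sq_eq, Finset.mul_sum]
  gcongr with i
  simpa [mul_pow, sq_abs] using pow_le_pow_left₀ (abs_nonneg _) (h i) 2

end EuclideanSpace

theorem stmt14_general
    (n : ℕ) (δ α : ℝ) (hδpos : 0 < δ) (hα : 0 < α)
    (hδfun : ℝ → ℝ)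
    (hhδ : ∀ z : ℝ, hδfun z = if -δ ≤ z then z ^ 2 / 2 else -δ * z - δ ^ 2 / 2)
    (f : EuclideanSpace ℝ (Fin n) → ℝ)
    (hf : ∀ x : EuclideanSpace ℝ (Fin n),
      f x = (∑ i : Fin n, ((i : ℕ) + 1 : ℝ) * hδfun (x i)) + α / 2 * ‖x‖ ^ 2) :
    ConvexOn ℝ Set.univ (fun x : EuclideanSpace ℝ (Fin n) => f x - α / 2 * ‖x‖ ^ 2) ∧
    Differentiable ℝ f ∧
    (∀ a b : EuclideanSpace ℝ (Fin n),
      ‖gradient f a - gradient f b‖ ≤ ((n : ℝ) + α) * ‖a - b‖) ∧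
    IsMinOn f Set.univ 0 ∧
    (∀ z : EuclideanSpace ℝ (Fin n), IsMinOn f Set.univ z → z = 0) := by
  obtain rfl : hδfun = huber δ := funext hhδ
  have hf_sum :
      f = fun x => ∑ i : Fin n, (((i : ℕ) + 1 : ℝ) * huber δ (x i) + α / 2 * x i ^ 2) :=
    funext fun x => by
      rw [hf, EuclideanSpace.real_norm_sq_eq, Finset.mul_sum, Finset.sum_add_distrib]
  have hgrad (x : EuclideanSpace ℝ (Fin n)) : HasGradientAt f
      (WithLp.toLp 2 fun i => ((i : ℕ) + 1 : ℝ) * max (x i) (-δ) + α * x i) x := by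
    rw [hf_sum]
    exact EuclideanSpace.hasGradientAt_sum_apply fun i =>
      (((hasDerivAt_huber δ _).const_mul _).fun_add
        ((hasDerivAt_pow 2 (x i)).const_mul (α / 2))).congr_deriv (by push_cast; ring)
  have hlow (x : EuclideanSpace ℝ (Fin n)) : α / 2 * ‖x‖ ^ 2 ≤ f x := by
    rw [hf]
    exact le_add_of_nonneg_left <| Finset.sum_nonneg fun i _ =>
      mul_nonneg (by positivity) (huber_nonneg hδpos.le _)
  have hf_zero : f 0 = 0 := by simp [hf, huber_zero hδpos.le]
  refine ⟨?_, fun x => (hgrad x).differentiableAt, fun a b => ?_, fun x _ => ?_, fun z hz => ?_⟩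
  · simpa only [hf, add_sub_cancel_right, smul_eq_mul] using
      EuclideanSpace.convexOn_sum_apply fun i : Fin n =>
        (convexOn_huber δ).smul (c := ((i : ℕ) + 1 : ℝ)) (by positivity)
  · rw [(hgrad a).gradient, (hgrad b).gradient]
    refine EuclideanSpace.norm_le_mul_norm_of_abs_le (by positivity) fun i => ?_
    simp only [PiLp.sub_apply]
    refine (abs_mul_max_add_mul_sub_le (by positivity) hα.le).trans ?_
    gcongr
    exact_mod_cast i.is_lt
  · simpa [hf_zero] using (mul_nonneg (by positivity) (sq_nonneg ‖x‖)).trans (hlow x)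
  · have hz0 : α / 2 * ‖z‖ ^ 2 ≤ 0 := hf_zero ▸ (hlow z).trans (hz (mem_univ 0))
    simpa [hα.ne'] using
      le_antisymm (nonpos_of_mul_nonpos_right hz0 (by positivity)) (sq_nonneg ‖z‖)

theorem stmt14
    (n : ℕ) (hn : 1 ≤ n) (δ α : ℝ) (hδpos : 0 < δ) (hα : 0 < α)
    (hδfun : ℝ → ℝ)
    (hhδ : ∀ z : ℝ, hδfun z = if -δ ≤ z then z ^ 2 / 2 else -δ * z - δ ^ 2 / 2)
    (f : EuclideanSpace ℝ (Fin n) → ℝ)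
    (hf : ∀ x : EuclideanSpace ℝ (Fin n),
      f x = (∑ i : Fin n, ((i : ℕ) + 1 : ℝ) * hδfun (x i)) + α / 2 * ‖x‖ ^ 2) :
    ConvexOn ℝ Set.univ (fun x : EuclideanSpace ℝ (Fin n) => f x - α / 2 * ‖x‖ ^ 2) ∧
    Differentiable ℝ f ∧
    (∀ a b : EuclideanSpace ℝ (Fin n),
      ‖gradient f a - gradient f b‖ ≤ ((n : ℝ) + α) * ‖a - b‖) ∧
    IsMinOn f Set.univ 0 ∧
    (∀ z : EuclideanSpace ℝ (Fin n), IsMinOn f Set.univ z → z = 0) :=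
  stmt14_general n δ α hδpos hα hδfun hhδ f hf
end
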